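/- Let F be a field of characteristic exponent p, let b be a well-ordered subset of F that is p-independent in F, and let a ⊆ F^(p)(b) be a subset. Then: (i) λ^b(𝔽[a]) ⊆ 𝔽[b ∪ λ^b(a)], where 𝔽[S] denotes the subring of F generated by the prime field and S; (ii) λ^b(𝔽(a)) ⊆ 𝔽(b ∪ λ^b(a)), where 𝔽(S) denotes the subfield of F generated by the prime field and S. -/
import Mathlib


open scoped Classical

namespace SepPaper

variable {F : Type*} [Field F]

/-- The image of a set under `x ↦ x ^ p`. -/
def pPow (p : ℕ) (S : Set F) : Set F := (fun x => x ^ p) '' S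

/-- `F^(p)`: the set of all `p`-th powers of the field `F`. -/
def pPowers (p : ℕ) (F : Type*) [Field F] : Set F := Set.range fun x : F => x ^ p

/-- `F^(p)C(S)`: the subfield of `F` generated by all `p`-th powers together with the
sets `C` and `S`. -/
def pSpan (p : ℕ) (C S : Set F) : Subfield F :=
  Subfield.closure (pPowers p F ∪ C ∪ S)

/-- `A` is `p`-independent in `F` over `C`: no `a ∈ A` lies in `F^(p)C(A \ {a})`. -/
def PIndep (p : ℕ) (C A : Set F) : Prop :=
  ∀ a ∈ A, a ∉ pSpan p C (A \ {a})

/-- `A` is a `p`-basis of `F` over `C`: `p`-independent and `p`-spanning over `C`. -/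
def PBasis (p : ℕ) (C A : Set F) : Prop :=
  PIndep p C A ∧ pSpan p C A = ⊤

/-- `A` is a `p`-basis over `C` of the subfield of `F` with carrier `E`:
`A ⊆ E`, `A` is `p`-independent in `E` over `C`, and `E = E^(p)C(A)`. -/
def PBasisOfSet (p : ℕ) (E C A : Set F) : Prop :=
  A ⊆ E ∧ (∀ x ∈ A, x ∉ Subfield.closure (pPow p E ∪ C ∪ (A \ {x}))) ∧
    E ⊆ ↑(Subfield.closure (pPow p E ∪ C ∪ A))

/-- `l` represents the (finitely supported) family `(λ^B_I(a))_{I ∈ p^{[|B|]}}`: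
all multi-indices in the support have entries `< p`, and
`a = Σ_I B^I · (l I)^p`. -/
def IsLambdaFam (p : ℕ) (B : Set F) (a : F) (l : (↥B →₀ ℕ) →₀ F) : Prop :=
  (∀ I ∈ l.support, ∀ t : ↥B, I t < p) ∧
    a = l.sum fun I y => (I.prod fun t k => (t : F) ^ k) * y ^ p

/-- The family of parameterized lambda functions `I ↦ λ^B_I(a)`
(defined to be `0` when no defining family exists; when `B` is `p`-independent and
`a ∈ F^(p)(B)` the defining family exists and is unique). -/
noncomputable def lambdaFam (p : ℕ) (B : Set F) (a : F) : (↥B →₀ ℕ) → F :=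
  if h : ∃ l, IsLambdaFam p B a l then ⇑h.choose else 0

/-- `λ^B(a)` for a single element `a`: the set of values `λ^B_I(a)`, `I ∈ p^{[|B|]}`. -/
def lambdaVals (p : ℕ) (B : Set F) (a : F) : Set F :=
  {y | ∃ I : ↥B →₀ ℕ, (∀ t, I t < p) ∧ y = lambdaFam p B a I}

/-- `λ^B(A)` for a set `A`: all values `λ^B_I(a)` for `a ∈ A ∩ F^(p)(B)`. -/
def lambdaSet (p : ℕ) (B A : Set F) : Set F :=
  {y | ∃ a ∈ A ∩ (pSpan p ∅ B : Set F), y ∈ lambdaVals p B a}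

/-- `E/C` is separable (with `p` the characteristic exponent): every `C`-linearly
independent tuple of elements of `E` has `C`-linearly independent `p`-th powers.
This is MacLane's criterion, equivalent to `E` being linearly disjoint from
`C^{(p^{-1})}` over `C` inside an algebraic closure. Here `C` and `E` are the carrier
sets of subfields of the ambient field. -/
def SepExt (p : ℕ) (C E : Set F) : Prop :=
  ∀ (n : ℕ) (x : Fin n → F), (∀ i, x i ∈ E) →
    (∀ d : Fin n → F, (∀ i, d i ∈ C) → (∑ i, d i * x i) = 0 → ∀ i, d i = 0) →
    ∀ d : Fin n → F, (∀ i, d i ∈ C) → (∑ i, d i * x i ^ p) = 0 → ∀ i, d i = 0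

/-- `E/C` is separated: separable and `E = E^(p)C`. -/
def SeparatedExt (p : ℕ) (C E : Set F) : Prop :=
  SepExt p C E ∧ E = ↑(Subfield.closure (pPow p E ∪ C))

/-- `D` is the Lambda closure `Λ_F C` of `C` in `F`: the minimum subfield of `F`
containing `C` such that `F/D` is separable. -/
def IsLambdaClosure (p : ℕ) (C : Set F) (D : Subfield F) : Prop :=
  C ⊆ ↑D ∧ SepExt p (↑D) (Set.univ : Set F) ∧
    ∀ D' : Subfield F, C ⊆ ↑D' → SepExt p (↑D') (Set.univ : Set F) → D ≤ D'

/-- `Λ^1_F C`: the subfield of `F` generated over `C` by all values `λ^b_I(a)` for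
finite `b ⊆ C` that are `p`-independent in `F`, and `a ∈ F^(p)(b) ∩ C`. -/
def Lambda1 (p : ℕ) (C : Subfield F) : Subfield F :=
  Subfield.closure ((C : Set F) ∪ {y | ∃ b : Set F, b ⊆ (C : Set F) ∧ b.Finite ∧
    PIndep p ∅ b ∧ ∃ a ∈ (pSpan p ∅ b : Set F) ∩ (C : Set F), y ∈ lambdaVals p b a})

/-- The iterates `Λ^n_F C`. -/
def LambdaIter (p : ℕ) (C : Subfield F) : ℕ → Subfield F
  | 0 => C
  | n + 1 => Lambda1 p (LambdaIter p C n)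

/-- `A`, `B`, `r` describe the sequence `(ℓ^n_{F/c}(a))_n` of pairs obtained by iterating
the splitting-pairs map `Λ_{F/c}` starting from `(∅, a)`, over the subfield with carrier
`Cs` with chosen `p`-basis `c`.  `A n` and `B n` are the two components of the `n`-th
pair, and `r n` is the well-ordering of `B n` (each `B (n+1)` extending `B n` as an
initial segment).  The `step` condition encodes one application of the splitting-pairs
map: `A (n+1) = A n ⌢ pInd_{F/C(A n)}(B n)` and `B (n+1) = B n ⌢ λ^{c⌢A(n+1)}(B n)`,
where the set `s = pInd_{F/C(A n)}(B n)` is characterized by keeping, running through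
`B n` in its well-order, exactly those elements not in the `p`-span over `C(A n)` of
those already kept. -/
structure IsSplitSeq (p : ℕ) (Cs c a : Set F) (A B : ℕ → Set F)
    (r : ℕ → F → F → Prop) : Prop where
  initA : A 0 = ∅
  initB : B 0 = a
  wf : ∀ n, (B n).WellFoundedOn (r n)
  trans : ∀ n, ∀ x ∈ B n, ∀ y ∈ B n, ∀ z ∈ B n, r n x y → r n y z → r n x z
  total : ∀ n, ∀ x ∈ B n, ∀ y ∈ B n, x = y ∨ r n x y ∨ r n y x
  irrefl : ∀ n, ∀ x ∈ B n, ¬ r n x x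
  mono : ∀ n, B n ⊆ B (n + 1)
  compat : ∀ n, ∀ x ∈ B n, ∀ y ∈ B n, (r (n + 1) x y ↔ r n x y)
  append : ∀ n, ∀ x ∈ B n, ∀ y ∈ B (n + 1), y ∉ B n → r (n + 1) x y
  step : ∀ n, ∃ s ⊆ B n,
    (∀ x ∈ B n, x ∈ s ↔
        x ∉ pSpan p ↑(Subfield.closure (Cs ∪ A n)) (s ∩ {y | r n y x})) ∧
      A (n + 1) = A n ∪ s ∧ B (n + 1) = B n ∪ lambdaSet p (c ∪ A (n + 1)) (B n)

/-- The family `v` is a linear basis, over the subfield `K`, of the subspace of the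
ambient field with carrier `E`: every element of `E` has a unique representation as a
finite `K`-linear combination of the `v i`. -/
def IsLinBasisOf (K : Subfield F) {ι : Type*} (v : ι → F) (E : Set F) : Prop :=
  (∀ i, v i ∈ E) ∧
    ∀ x ∈ E, ∃! l : ι →₀ F, (∀ i, l i ∈ K) ∧ x = l.sum fun i k => k * v i

end SepPaper

namespace SepPaper

/-! ### Auxiliary development for Statement 5 -/

section Aux

variable {F : Type*} [Field F]

/-- The monomial `B^I`. -/
@[reducible] noncomputable def mono (B : Set F) (I : ↥B →₀ ℕ) : F :=
  I.prod fun t k => (t : F) ^ k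

/-- The summand function appearing in `IsLambdaFam`. -/
@[reducible] noncomputable def lamFun (p : ℕ) (B : Set F) : (↥B →₀ ℕ) → F → F :=
  fun I y => mono B I * y ^ p

lemma isLambdaFam_iff {p : ℕ} {B : Set F} {a : F} {l : (↥B →₀ ℕ) →₀ F} :
    IsLambdaFam p B a l ↔
      (∀ I ∈ l.support, ∀ t : ↥B, I t < p) ∧ a = l.sum (lamFun p B) :=
  Iff.rfl

variable {p : ℕ} {B : Set F}

lemma mono_zero : mono B 0 = 1 := Finsupp.prod_zero_index

lemma mono_single (t : ↥B) (k : ℕ) : mono B (Finsupp.single t k) = (t : F) ^ k :=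
  Finsupp.prod_single_index (pow_zero _)

lemma mono_add (I J : ↥B →₀ ℕ) : mono B (I + J) = mono B I * mono B J :=
  Finsupp.prod_add_index' (fun _ => pow_zero _) (fun _ _ _ => pow_add _ _ _)

lemma mono_mem {S : Subring F} (hBS : B ⊆ S) (I : ↥B →₀ ℕ) : mono B I ∈ S :=
  prod_mem fun t _ => pow_mem (hBS t.2) _

section ExpChar

variable [ExpChar F p]

lemma lamFun_zero (I : ↥B →₀ ℕ) : lamFun p B I 0 = 0 := by
  simp [lamFun, zero_pow (expChar_pos F p).ne']

lemma lamFun_add (I : ↥B →₀ ℕ) (y z : F) :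
    lamFun p B I (y + z) = lamFun p B I y + lamFun p B I z := by
  simp only [lamFun, add_pow_expChar, mul_add]

lemma lamFun_sub (I : ↥B →₀ ℕ) (y z : F) :
    lamFun p B I (y - z) = lamFun p B I y - lamFun p B I z := by
  simp only [lamFun, sub_pow_expChar, mul_sub]

lemma mono_modDiv (I : ↥B →₀ ℕ) :
    mono B I = mono B (I.mapRange (· % p) (Nat.zero_mod p)) *
      mono B (I.mapRange (· / p) (Nat.zero_div p)) ^ p := by
  classical
  rw [mono, mono, mono,
    Finsupp.prod_of_support_subset (I.mapRange (· % p) (Nat.zero_mod p))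
      Finsupp.support_mapRange _ (fun t _ => pow_zero _),
    Finsupp.prod_of_support_subset (I.mapRange (· / p) (Nat.zero_div p))
      Finsupp.support_mapRange _ (fun t _ => pow_zero _),
    ← Finset.prod_pow, ← Finset.prod_mul_distrib]
  refine Finset.prod_congr rfl fun t _ => ?_
  rw [Finsupp.mapRange_apply, Finsupp.mapRange_apply, ← pow_mul, ← pow_add,
    Nat.mod_add_div' (I t) p]

/-- An `IsLambdaFam` family with values in a subring. -/
def Good (p : ℕ) (B : Set F) (S : Subring F) (x : F) : Prop :=
  ∃ l, IsLambdaFam p B x l ∧ ∀ I, l I ∈ S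

lemma good_zero {S : Subring F} : Good p B S 0 := by
  refine ⟨0, ⟨?_, ?_⟩, fun I => ?_⟩
  · simp
  · rw [Finsupp.sum_zero_index]
  · exact zero_mem S

lemma good_single {S : Subring F} (I : ↥B →₀ ℕ) (hI : ∀ t, I t < p) {c : F} (hc : c ∈ S) :
    Good p B S (mono B I * c ^ p) := by
  classical
  refine ⟨Finsupp.single I c, ⟨?_, ?_⟩, fun J => ?_⟩
  · intro J hJ t
    have := Finset.mem_singleton.mp (Finsupp.support_single_subset hJ)
    subst this
    exact hI t
  · rw [Finsupp.sum_single_index (lamFun_zero _)]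
  · rw [Finsupp.single_apply]
    split
    · exact hc
    · exact zero_mem S

lemma good_ppow {S : Subring F} {c : F} (hc : c ∈ S) : Good p B S (c ^ p) := by
  have := good_single (S := S) (0 : ↥B →₀ ℕ) (fun t => by simpa using expChar_pos F p) hc
  rwa [mono_zero, one_mul] at this

lemma good_one {S : Subring F} : Good p B S (1 : F) := by
  have := good_ppow (p := p) (B := B) (S := S) (one_mem S)
  rwa [one_pow] at this

lemma good_neg_one {S : Subring F} : Good p B S (-1 : F) := by
  have h : ((-1 : F)) ^ p = -1 := by
    have := sub_pow_expChar (0 : F) 1 (p := p)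
    simpa [zero_pow (expChar_pos F p).ne'] using this
  have := good_ppow (p := p) (B := B) (S := S) (neg_mem (one_mem S))
  rwa [h] at this

lemma good_add {S : Subring F} {x y : F} (hx : Good p B S x) (hy : Good p B S y) :
    Good p B S (x + y) := by
  classical
  obtain ⟨l, ⟨hl1, hl2⟩, hl3⟩ := hx
  obtain ⟨m, ⟨hm1, hm2⟩, hm3⟩ := hy
  refine ⟨l + m, ⟨?_, ?_⟩, fun I => ?_⟩
  · intro I hI t
    rcases Finset.mem_union.mp (Finsupp.support_add hI) with h | h
    · exact hl1 I h t
    · exact hm1 I h t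
  · rw [Finsupp.sum_add_index' (fun I => lamFun_zero I) (fun I y z => lamFun_add I y z),
      ← hl2, ← hm2]
  · rw [Finsupp.add_apply]
    exact add_mem (hl3 I) (hm3 I)

lemma good_sum {S : Subring F} {ι : Type*} (s : Finset ι) (k : ι → ↥B →₀ ℕ) (v : ι → F)
    (hk : ∀ i ∈ s, ∀ t, k i t < p) (hv : ∀ i ∈ s, v i ∈ S) :
    Good p B S (∑ i ∈ s, mono B (k i) * v i ^ p) := by
  classical
  induction s using Finset.induction_on with
  | empty => simpa using good_zero
  | @insert a s ha ih =>
    rw [Finset.sum_insert ha]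
    exact good_add
      (good_single (k a) (hk a (Finset.mem_insert_self a s)) (hv a (Finset.mem_insert_self a s)))
      (ih (fun i hi => hk i (Finset.mem_insert_of_mem hi))
        (fun i hi => hv i (Finset.mem_insert_of_mem hi)))

lemma good_mul {S : Subring F} (hBS : B ⊆ S) {x y : F} (hx : Good p B S x)
    (hy : Good p B S y) : Good p B S (x * y) := by
  classical
  obtain ⟨l, ⟨hl1, hl2⟩, hl3⟩ := hx
  obtain ⟨m, ⟨hm1, hm2⟩, hm3⟩ := hy
  have key : x * y = ∑ q ∈ l.support ×ˢ m.support,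
      mono B ((q.1 + q.2).mapRange (· % p) (Nat.zero_mod p)) *
        (mono B ((q.1 + q.2).mapRange (· / p) (Nat.zero_div p)) * (l q.1 * m q.2)) ^ p := by
    rw [hl2, hm2]
    rw [show (l.sum (lamFun p B)) * (m.sum (lamFun p B)) =
        ∑ I ∈ l.support, ∑ J ∈ m.support, lamFun p B I (l I) * lamFun p B J (m J) from
      Finset.sum_mul_sum _ _ _ _]
    rw [← Finset.sum_product']
    refine Finset.sum_congr rfl fun q _ => ?_
    have hsplit : mono B q.1 * mono B q.2 =
        mono B ((q.1 + q.2).mapRange (· % p) (Nat.zero_mod p)) *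
          mono B ((q.1 + q.2).mapRange (· / p) (Nat.zero_div p)) ^ p := by
      rw [← mono_add]
      exact mono_modDiv (p := p) (q.1 + q.2)
    calc lamFun p B q.1 (l q.1) * lamFun p B q.2 (m q.2)
        = (mono B q.1 * mono B q.2) * (l q.1 ^ p * m q.2 ^ p) := by
          simp only [lamFun]; ring
      _ = mono B ((q.1 + q.2).mapRange (· % p) (Nat.zero_mod p)) *
            (mono B ((q.1 + q.2).mapRange (· / p) (Nat.zero_div p)) * (l q.1 * m q.2)) ^ p := by
          rw [hsplit, mul_pow, mul_pow]; ring
  rw [key]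
  exact good_sum _ _ _
    (fun q _ t => by rw [Finsupp.mapRange_apply]; exact Nat.mod_lt _ (expChar_pos F p))
    (fun q _ => mul_mem (mono_mem hBS _) (mul_mem (hl3 q.1) (hm3 q.2)))

lemma good_neg {S : Subring F} (hBS : B ⊆ S) {x : F} (hx : Good p B S x) :
    Good p B S (-x) := by
  have := good_mul hBS (good_neg_one (S := S)) hx
  rwa [neg_one_mul] at this

lemma good_pow {S : Subring F} (hBS : B ⊆ S) {x : F} (hx : Good p B S x) :
    ∀ n : ℕ, Good p B S (x ^ n)
  | 0 => by rw [pow_zero]; exact good_one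
  | n + 1 => by rw [pow_succ]; exact good_mul hBS (good_pow hBS hx n) hx

lemma good_mul_ppow {S : Subring F} {x c : F} (hx : Good p B S x) (hc : c ∈ S) :
    Good p B S (x * c ^ p) := by
  obtain ⟨l, ⟨hl1, hl2⟩, hl3⟩ := hx
  refine ⟨l.mapRange (· * c) (zero_mul c), ⟨?_, ?_⟩, fun I => ?_⟩
  · intro I hI t
    exact hl1 I (Finsupp.support_mapRange hI) t
  · rw [Finsupp.sum_mapRange_index (fun I => lamFun_zero I), hl2]
    rw [show (l.sum (lamFun p B)) * c ^ p = l.sum fun I y => lamFun p B I y * c ^ p from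
      Finsupp.sum_mul _ _]
    exact Finsupp.sum_congr fun I _ => by simp only [lamFun, mul_pow]; ring
  · rw [Finsupp.mapRange_apply]
    exact mul_mem (hl3 I) hc

lemma good_inv {S : Subring F} (hBS : B ⊆ S) {x : F} (hx : Good p B S x)
    (hxS : x⁻¹ ∈ S) : Good p B S x⁻¹ := by
  rcases eq_or_ne x 0 with rfl | hx0
  · rw [inv_zero]; exact good_zero
  · have key : x⁻¹ = x ^ (p - 1) * (x⁻¹) ^ p := by
      have hxp : x ^ p = x ^ (p - 1) * x := by
        rw [← pow_succ, Nat.sub_add_cancel (expChar_pos F p)]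
      rw [inv_pow, hxp, mul_inv, ← mul_assoc,
        mul_inv_cancel₀ (pow_ne_zero _ hx0), one_mul]
    rw [key]
    exact good_mul_ppow (good_pow hBS hx _) hxS

/-- Existence of a lambda family for every element of `F^(p)(B)`. -/
lemma exists_fam {x : F} (hx : x ∈ pSpan p (∅ : Set F) B) :
    ∃ l, IsLambdaFam p B x l := by
  have hgood : Good p B ⊤ x := by
    refine Subfield.closure_induction ?_ ?_ ?_ ?_ ?_ ?_ hx
    · rintro y (⟨(⟨c, rfl⟩ | hy)⟩ | hyB)
      · exact good_ppow (p := p) (B := B) (S := (⊤ : Subring F)) (c := c) (Subring.mem_top _)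
      · cases hy
      · by_cases hp1 : 1 < p
        · have h := good_single (p := p) (B := B) (S := (⊤ : Subring F))
            (Finsupp.single (⟨y, hyB⟩ : ↥B) 1) ?_ (c := 1) (Subring.mem_top _)
          · rwa [mono_single, pow_one, one_pow, mul_one] at h
          · intro t
            rw [Finsupp.single_apply]
            split
            · exact hp1
            · exact expChar_pos F p
        · have hpeq : p = 1 := by have := expChar_pos F p; omega
          have h := good_ppow (p := p) (B := B) (S := (⊤ : Subring F)) (c := y) (Subring.mem_top _)
          rwa [show y ^ p = y by rw [hpeq, pow_one]] at h
    · exact good_one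
    · exact fun x y _ _ hx hy => good_add hx hy
    · exact fun x _ hx => good_neg (fun _ _ => Subring.mem_top _) hx
    · exact fun x _ hx => good_inv (fun _ _ => Subring.mem_top _) hx (Subring.mem_top _)
    · exact fun x y _ _ hx hy => good_mul (fun _ _ => Subring.mem_top _) hx hy
  exact hgood.imp fun l hl => hl.1

end ExpChar

end Aux


section Unique

variable {F : Type*} [Field F] {p : ℕ} {B : Set F} [ExpChar F p]

open Polynomial in
lemma lin_indep_pows (hB : PIndep p ∅ B) {b : F} (hb : b ∈ B) (c : ℕ → F)
    (hc : ∀ k, c k ∈ pSpan p (∅ : Set F) (B \ {b}))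
    (hsum : ∑ k ∈ Finset.range p, c k * b ^ k = 0) : ∀ k < p, c k = 0 := by
  classical
  cases ‹ExpChar F p› with
  | zero =>
    intro k hk
    interval_cases k
    simpa using hsum
  | prime hq =>
    haveI : Fact p.Prime := ⟨hq⟩
    set K : Subfield F := pSpan p (∅ : Set F) (B \ {b}) with hK
    have hbK : b ∉ K := hB b hb
    have hbpK : b ^ p ∈ K := Subfield.subset_closure (Or.inl (Or.inl ⟨b, rfl⟩))
    have hint : IsIntegral K b := by
      refine ⟨X ^ p - C (⟨b ^ p, hbpK⟩ : K), monic_X_pow_sub_C _ hq.ne_zero, ?_⟩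
      simp only [eval₂_sub, eval₂_X_pow, eval₂_C]
      show b ^ p - b ^ p = 0
      ring
    have hXp : (X - C b) ^ p = X ^ p - C (b ^ p) := by
      rw [sub_pow_char, ← C_pow]
    obtain ⟨n, hnle, hass⟩ : ∃ n ≤ p, Associated ((minpoly K b).map (algebraMap K F))
        ((X - C b) ^ n) := by
      refine (dvd_prime_pow (prime_X_sub_C b) p).mp ?_
      have h1 : minpoly K b ∣ X ^ p - C (⟨b ^ p, hbpK⟩ : K) := by
        refine minpoly.dvd K b ?_
        simp only [map_sub, map_pow, aeval_X, aeval_C]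
        show b ^ p - b ^ p = 0
        ring
      have h2 := Polynomial.map_dvd (algebraMap K F) h1
      rwa [Polynomial.map_sub, Polynomial.map_pow, Polynomial.map_X, Polynomial.map_C,
        show (algebraMap K F) (⟨b ^ p, hbpK⟩ : K) = b ^ p from rfl, ← hXp] at h2
    have hmon : ((minpoly K b).map (algebraMap K F)).Monic := (minpoly.monic hint).map _
    have heq : (minpoly K b).map (algebraMap K F) = (X - C b) ^ n :=
      eq_of_monic_of_associated hmon ((monic_X_sub_C b).pow n) hass
    have hdeg : (minpoly K b).natDegree = n := by
      rw [← natDegree_map (algebraMap K F) (p := minpoly K b), heq, natDegree_pow,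
        natDegree_X_sub_C, mul_one]
    have hn1 : 1 ≤ n := hdeg ▸ minpoly.natDegree_pos hint
    have hnp : n = p := by
      by_contra hne
      have hnlt : n < p := lt_of_le_of_ne hnle hne
      have hcoeff : ((X - C b) ^ n).coeff (n - 1) = -b * n := by
        rw [sub_eq_add_neg, ← C_neg, coeff_X_add_C_pow,
          show n - (n - 1) = 1 by omega, pow_one,
          show n.choose (n - 1) = n by
            rw [Nat.choose_symm hn1, Nat.choose_one_right]]
      have hmem : -b * n ∈ K := by
        have h3 : ((minpoly K b).map (algebraMap K F)).coeff (n - 1) ∈ K := by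
          rw [coeff_map]
          exact SetLike.coe_mem _
        rwa [heq, hcoeff] at h3
      have hcast : ((n : F)) ≠ 0 := by
        intro h0
        have := (CharP.cast_eq_zero_iff F p n).mp h0
        have := Nat.le_of_dvd (by omega) this
        omega
      have hbmem : b ∈ K := by
        have h1 : ((n : F)) ∈ K := by
          exact_mod_cast natCast_mem K n
        have h2 : b = -((-b * n) * ((n : F))⁻¹) := by
          field_simp
        rw [h2]
        exact neg_mem (mul_mem hmem (inv_mem h1))
      exact hbK hbmem
    intro k hk
    set q : Polynomial K := ∑ j ∈ Finset.range p, Polynomial.monomial j (⟨c j, hc j⟩ : K)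
      with hqdef
    have haq : Polynomial.aeval b q = 0 := by
      rw [hqdef, map_sum]
      simp only [Polynomial.aeval_monomial]
      show ∑ j ∈ Finset.range p, ((⟨c j, hc j⟩ : K) : F) * b ^ j = 0
      exact hsum
    have hq0 : q = 0 := by
      by_contra hqne
      have hle := minpoly.degree_le_of_ne_zero K b hqne haq
      have h2 : q.natDegree ≤ p - 1 := by
        refine natDegree_sum_le_of_forall_le _ _ fun j hj => ?_
        have hj' : j < p := Finset.mem_range.mp hj
        exact le_trans (natDegree_monomial_le _) (by omega)
      have h3 : (minpoly K b).natDegree ≤ q.natDegree := natDegree_le_natDegree hle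
      have h4 : 2 ≤ p := hq.two_le
      omega
    have hcoeffk : q.coeff k = 0 := by rw [hq0, coeff_zero]
    rw [hqdef, finset_sum_coeff] at hcoeffk
    simp only [coeff_monomial] at hcoeffk
    rw [Finset.sum_ite_eq' (Finset.range p) k] at hcoeffk
    rw [if_pos (Finset.mem_range.mpr hk)] at hcoeffk
    exact Subtype.ext_iff.mp hcoeffk

lemma lam_unique_aux (hB : PIndep p ∅ B) (s : Finset ↥B) :
    ∀ l : (↥B →₀ ℕ) →₀ F, (∀ I ∈ l.support, ∀ t : ↥B, I t < p) →
      (∀ I ∈ l.support, I.support ⊆ s) → l.sum (lamFun p B) = 0 → l = 0 := by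
  classical
  induction s using Finset.induction_on with
  | empty =>
    intro l hlt hsupp hsum
    have h0 : l.support ⊆ {0} := by
      intro I hI
      rw [Finset.mem_singleton]
      exact Finsupp.support_eq_empty.mp (Finset.subset_empty.mp (hsupp I hI))
    have hl : l = Finsupp.single 0 (l 0) := Finsupp.support_subset_singleton.mp h0
    rw [hl, Finsupp.sum_single_index (lamFun_zero _)] at hsum
    have hz : l 0 = 0 := by
      have h1 : (l 0) ^ p = 0 := by
        simpa [lamFun, mono_zero] using hsum
      exact pow_eq_zero_iff (expChar_pos F p).ne' |>.mp h1
    rw [hl, hz, Finsupp.single_zero]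
  | @insert b s hbs ih =>
    intro l hlt hsupp hsum
    set c : ℕ → F := fun k =>
      (Finsupp.mapDomain (fun I : ↥B →₀ ℕ => I.erase b)
        (l.filter fun I => I b = k)).sum (lamFun p B) with hcdef
    have hck : ∀ k, c k = ∑ I ∈ l.support.filter (fun I => I b = k),
        mono B (I.erase b) * (l I) ^ p := by
      intro k
      simp only [hcdef]
      rw [Finsupp.sum_mapDomain_index (fun J => lamFun_zero J) (fun J y z => lamFun_add J y z)]
      rw [Finsupp.sum_filter_index]
      rw [Finsupp.support_filter]
    -- the fiberwise sums reproduce the total sum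
    have htot : ∑ k ∈ Finset.range p, c k * b ^ k = 0 := by
      have hsum' : ∑ I ∈ l.support, lamFun p B I (l I) = 0 := hsum
      rw [← hsum']
      have hmaps : ∀ I ∈ l.support, I b ∈ Finset.range p :=
        fun I hI => Finset.mem_range.mpr (hlt I hI b)
      rw [← Finset.sum_fiberwise_of_maps_to hmaps (fun I => lamFun p B I (l I))]
      refine Finset.sum_congr rfl fun k _ => ?_
      rw [hck k, Finset.sum_mul]
      refine Finset.sum_congr rfl fun I hI => ?_
      have hIb : I b = k := (Finset.mem_filter.mp hI).2
      have hIexp : mono B I = mono B (I.erase b) * (b : F) ^ k := by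
        conv_lhs => rw [← Finsupp.erase_add_single b I]
        rw [mono_add, mono_single, hIb]
      simp only [lamFun, hIexp]
      ring
    have hcK : ∀ k, c k ∈ pSpan p (∅ : Set F) (B \ {(b : F)}) := by
      intro k
      rw [hck k]
      refine sum_mem fun I _ => mul_mem ?_ ?_
      · refine prod_mem fun t ht => ?_
        have htb : t ≠ b := by
          intro h
          rw [h] at ht
          exact (Finsupp.notMem_support_iff.mpr (Finsupp.erase_same)) ht
        have htB : (t : F) ∈ B \ {(b : F)} := ⟨t.2, by simpa [Subtype.ext_iff] using htb⟩
        have h1 : (t : F) ∈ pSpan p (∅ : Set F) (B \ {(b : F)}) :=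
          Subfield.subset_closure (Or.inr htB)
        exact pow_mem h1 _
      · have h2 : (l I) ^ p ∈ pSpan p (∅ : Set F) (B \ {(b : F)}) :=
          Subfield.subset_closure (Or.inl (Or.inl ⟨l I, rfl⟩))
        exact h2
    have hc0 : ∀ k < p, c k = 0 := lin_indep_pows hB b.2 c hcK htot
    -- apply the induction hypothesis fiberwise
    have hfib : ∀ k, k < p → Finsupp.mapDomain (fun I : ↥B →₀ ℕ => I.erase b)
        (l.filter fun I => I b = k) = 0 := by
      intro k hk
      refine ih _ ?_ ?_ ?_
      · intro J hJ t
        obtain ⟨I, hI, rfl⟩ := Finset.mem_image.mp (Finsupp.mapDomain_support hJ)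
        have hIl : I ∈ l.support := by
          have h' : I ∈ l.support.filter (fun I : ↥B →₀ ℕ => I b = k) := by
            simpa using hI
          exact (Finset.mem_filter.mp h').1
        rcases eq_or_ne t b with rfl | htb
        · rw [Finsupp.erase_same]
          exact expChar_pos F p
        · rw [Finsupp.erase_ne htb]
          exact hlt I hIl t
      · intro J hJ t ht
        obtain ⟨I, hI, rfl⟩ := Finset.mem_image.mp (Finsupp.mapDomain_support hJ)
        have hIl : I ∈ l.support := by
          have h' : I ∈ l.support.filter (fun I : ↥B →₀ ℕ => I b = k) := by
            simpa using hI
          exact (Finset.mem_filter.mp h').1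
        rw [Finsupp.support_erase, Finset.mem_erase] at ht
        rcases Finset.mem_insert.mp (hsupp I hIl ht.2) with h | h
        · exact absurd h ht.1
        · exact h
      · have h' := hc0 k hk
        simpa only [hcdef] using h'
    -- conclude that l vanishes
    ext I
    rw [Finsupp.coe_zero, Pi.zero_apply]
    by_cases hI : I ∈ l.support
    · have hkI : I b < p := hlt I hI b
      have heval : (Finsupp.mapDomain (fun J : ↥B →₀ ℕ => J.erase b)
          (l.filter fun J => J b = I b)) (I.erase b)
          = (l.filter fun J => J b = I b) I := by
        refine Finsupp.mapDomain_apply' {J : ↥B →₀ ℕ | J b = I b} _ ?_ ?_ ?_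
        · intro J hJ
          have h' : J ∈ l.support.filter (fun J : ↥B →₀ ℕ => J b = I b) := by
            simpa using hJ
          exact (Finset.mem_filter.mp h').2
        · intro J₁ h₁ J₂ h₂ hE
          ext t
          rcases eq_or_ne t b with rfl | htb
          · rw [h₁, h₂]
          · have := congrFun (congrArg (⇑) hE) t
            rwa [Finsupp.erase_ne htb, Finsupp.erase_ne htb] at this
        · exact rfl
      rw [hfib (I b) hkI] at heval
      rw [Finsupp.filter_apply, if_pos rfl] at heval
      simpa using heval.symm
    · exact Finsupp.notMem_support_iff.mp hI

lemma lam_unique (hB : PIndep p ∅ B) {l : (↥B →₀ ℕ) →₀ F}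
    (hlt : ∀ I ∈ l.support, ∀ t : ↥B, I t < p)
    (hsum : l.sum (lamFun p B) = 0) : l = 0 := by
  classical
  exact lam_unique_aux hB (l.support.biUnion fun I => I.support) l hlt
    (fun I hI => fun t ht => Finset.mem_biUnion.mpr ⟨I, hI, ht⟩) hsum

lemma isLambdaFam_unique (hB : PIndep p ∅ B) {x : F} {l l' : (↥B →₀ ℕ) →₀ F}
    (h : IsLambdaFam p B x l) (h' : IsLambdaFam p B x l') : l = l' := by
  classical
  have hz : l - l' = 0 := by
    refine lam_unique hB ?_ ?_
    · intro I hI t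
      rcases Finset.mem_union.mp (Finsupp.support_sub hI) with hh | hh
      · exact h.1 I hh t
      · exact h'.1 I hh t
    · rw [Finsupp.sum_sub_index (fun I y z => lamFun_sub I y z), ← h.2, ← h'.2, sub_self]
  exact sub_eq_zero.mp hz

lemma lambdaFam_eq (hB : PIndep p ∅ B) {x : F} {l : (↥B →₀ ℕ) →₀ F}
    (hl : IsLambdaFam p B x l) : lambdaFam p B x = ⇑l := by
  rw [lambdaFam, dif_pos ⟨l, hl⟩]
  exact congrArg _ (isLambdaFam_unique hB (Exists.choose_spec (⟨l, hl⟩ : ∃ l, IsLambdaFam p B x l)) hl)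

end Unique

section Main

variable {F : Type*} [Field F] {p : ℕ} {B : Set F} [ExpChar F p]

lemma bot_pow_eq {x : F} (hx : x ∈ (⊥ : Subfield F)) : x ^ p = x := by
  rw [← Subfield.closure_empty] at hx
  refine Subfield.closure_induction ?_ ?_ ?_ ?_ ?_ ?_ hx
  · rintro y ⟨⟩
  · exact one_pow p
  · intro a b _ _ ha hb
    rw [add_pow_expChar, ha, hb]
  · intro a _ ha
    have h : (-a) ^ p = -(a ^ p) := by
      simpa [zero_pow (expChar_pos F p).ne'] using sub_pow_expChar (p := p) (0 : F) a
    rw [h, ha]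
  · intro a _ ha
    rw [inv_pow, ha]
  · intro a b _ _ ha hb
    rw [mul_pow, ha, hb]

lemma main_good (hB : PIndep p ∅ B) {A : Set F} (hA : A ⊆ (pSpan p (∅ : Set F) B : Set F))
    {S : Subring F} (hBS : B ⊆ S) (hlamS : lambdaSet p B A ⊆ S) {a : F} (ha : a ∈ A) :
    Good p B S a := by
  obtain ⟨l, hl⟩ := exists_fam (hA ha)
  refine ⟨l, hl, fun I => ?_⟩
  by_cases hI : I ∈ l.support
  · have heq : l I = lambdaFam p B a I := by rw [lambdaFam_eq hB hl]
    rw [heq]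
    exact hlamS ⟨a, ⟨ha, hA ha⟩, I, fun t => hl.1 I hI t, rfl⟩
  · rw [Finsupp.notMem_support_iff.mp hI]
    exact zero_mem S

lemma good_mem {T : Subfield F} {x : F} (hBT : B ⊆ T) (h : Good p B T.toSubring x) :
    x ∈ T := by
  obtain ⟨l, hl, hmem⟩ := h
  rw [hl.2]
  exact sum_mem fun I _ =>
    mul_mem (prod_mem fun t _ => pow_mem (hBT t.2) _) (pow_mem (hmem I) p)

lemma lambdaSet_subset_of_good {E : Set F} {S : Subring F} (hB : PIndep p ∅ B)
    (hgood : ∀ x ∈ E, Good p B S x) : lambdaSet p B E ⊆ S := by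
  rintro y ⟨x, ⟨hxE, _⟩, I, hIadm, rfl⟩
  obtain ⟨l, hl, hmem⟩ := hgood x hxE
  rw [lambdaFam_eq hB hl]
  exact hmem I

end Main


/-- Lemma `lambda_calculus`.
Let `F` be a field of characteristic exponent `p`, `B ⊆ F` `p`-independent in `F`, and
`A ⊆ F^(p)(B)`.  Then (i) `λ^B(𝔽[A]) ⊆ 𝔽[B ∪ λ^B(A)]` (subrings generated together
with the prime field), and (ii) `λ^B(𝔽(A)) ⊆ 𝔽(B ∪ λ^B(A))` (subfields). -/
theorem statement5 {F : Type*} [Field F] (p : ℕ) (hp : p = ringExpChar F)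
    (B : Set F) (hB : PIndep p ∅ B) (A : Set F) (hA : A ⊆ (pSpan p ∅ B : Set F)) :
    lambdaSet p B ↑(Subring.closure (((⊥ : Subfield F) : Set F) ∪ A)) ⊆
      ↑(Subring.closure (((⊥ : Subfield F) : Set F) ∪ B ∪ lambdaSet p B A)) ∧
    lambdaSet p B ↑(Subfield.closure A) ⊆
      ↑(Subfield.closure (B ∪ lambdaSet p B A)) := by
  haveI : ExpChar F p := ringExpChar.of_eq hp.symm
  constructor
  · -- (i) subring version
    set S : Subring F :=
      Subring.closure (((⊥ : Subfield F) : Set F) ∪ B ∪ lambdaSet p B A) with hS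
    have hBS : B ⊆ S := fun b hb => Subring.subset_closure (Or.inl (Or.inr hb))
    have hlamS : lambdaSet p B A ⊆ S := fun y hy => Subring.subset_closure (Or.inr hy)
    refine lambdaSet_subset_of_good hB ?_
    intro x hx
    refine Subring.closure_induction ?_ good_zero good_one
      (fun a b _ _ ha hb => good_add ha hb)
      (fun a _ ha => good_neg hBS ha)
      (fun a b _ _ ha hb => good_mul hBS ha hb) hx
    rintro y (hy | hy)
    · have hyS : y ∈ S := Subring.subset_closure (Or.inl (Or.inl hy))
      have h := good_ppow (p := p) (B := B) (S := S) hyS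
      rwa [bot_pow_eq hy] at h
    · exact main_good hB hA hBS hlamS hy
  · -- (ii) subfield version
    set T : Subfield F := Subfield.closure (B ∪ lambdaSet p B A) with hT
    have hBT : B ⊆ T := fun b hb => Subfield.subset_closure (Or.inl hb)
    have hBT' : B ⊆ T.toSubring := fun b hb => hBT hb
    have hlamT : lambdaSet p B A ⊆ T.toSubring := fun y hy => Subfield.subset_closure (Or.inr hy)
    have key : ∀ x ∈ Subfield.closure A, Good p B T.toSubring x ∧ x ∈ T := by
      intro x hx
      refine Subfield.closure_induction ?_ ⟨good_one, one_mem T⟩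
        (fun a b _ _ ha hb => ⟨good_add ha.1 hb.1, add_mem ha.2 hb.2⟩)
        (fun a _ ha => ⟨good_neg hBT' ha.1, neg_mem ha.2⟩)
        (fun a _ ha => ⟨good_inv hBT' ha.1 (show a⁻¹ ∈ T.toSubring from (inv_mem ha.2 : a⁻¹ ∈ T)), inv_mem ha.2⟩)
        (fun a b _ _ ha hb => ⟨good_mul hBT' ha.1 hb.1, mul_mem ha.2 hb.2⟩) hx
      intro y hy
      have hgood := main_good hB hA (S := T.toSubring) hBT' hlamT hy
      exact ⟨hgood, good_mem hBT hgood⟩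
    exact lambdaSet_subset_of_good hB fun x hx => (key x hx).1


end SepPaper
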